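/- arXiv:2203.12509 — 3 statements merged into one kernel-verified Lean document; each statement's English description precedes it below -/
import Mathlib

section
/- Let (Ω, P) be a probability space with random variables A, Y, S taking values in {0,1} and U taking values in a finite set. Suppose (i) S ⊥ A | (Y, U), (ii) P(Y=1 | A=a, U=u) = exp(β₀·a)·g(u) for all a ∈ {0,1} and u, where g(u) > 0, and (iii) 0 < P(A=a | U=u) < 1 for all a, u. Then for every u with P(U=u, S=1) > 0, E[(-1)^{1-A} · (1/P(A|U)) · Y · exp(-β₀·A) | U=u, S=1] = 0. -/
open scoped BigOperators
open Real

attribute [local instance] Classical.propDecidable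

noncomputable section

variable {Ω : Type*}

/-- Probability of an event under weight function `P` on a finite sample space. -/
def pr [Fintype Ω] (P : Ω → ℝ) (E : Ω → Prop) : ℝ :=
  ∑ ω, if E ω then P ω else 0

/-- Conditional probability `P(E | F)`. -/
def cpr [Fintype Ω] (P : Ω → ℝ) (E F : Ω → Prop) : ℝ :=
  pr P (fun ω => E ω ∧ F ω) / pr P F

/-- Conditional expectation `E[f | F]`. -/
def cexp [Fintype Ω] (P : Ω → ℝ) (f : Ω → ℝ) (F : Ω → Prop) : ℝ :=
  (∑ ω, if F ω then f ω * P ω else 0) / pr P F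

/-- Conditional independence `f ⊥ g | h` under `P`. -/
def CondIndep [Fintype Ω] (P : Ω → ℝ) {α β γ : Type*}
    (f : Ω → α) (g : Ω → β) (h : Ω → γ) : Prop :=
  ∀ a b c, pr P (fun ω => h ω = c) ≠ 0 →
    cpr P (fun ω => f ω = a ∧ g ω = b) (fun ω => h ω = c) =
      cpr P (fun ω => f ω = a) (fun ω => h ω = c) *
        cpr P (fun ω => g ω = b) (fun ω => h ω = c)


lemma pr_nonneg [Fintype Ω] {P : Ω → ℝ} (hP : ∀ ω, 0 ≤ P ω) (E : Ω → Prop) :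
    0 ≤ pr P E :=
  Finset.sum_nonneg fun ω _ => by by_cases h : E ω <;> simp [pr, h, hP ω]

lemma pr_congr [Fintype Ω] {P : Ω → ℝ} {E F : Ω → Prop} (h : ∀ ω, E ω ↔ F ω) :
    pr P E = pr P F :=
  Finset.sum_congr rfl fun ω _ => by rw [iff_iff_eq.mp (h ω)]

lemma cpr_congr [Fintype Ω] {P : Ω → ℝ} {E E' F F' : Ω → Prop}
    (hE : ∀ ω, E ω ↔ E' ω) (hF : ∀ ω, F ω ↔ F' ω) :
    cpr P E F = cpr P E' F' := by
  unfold cpr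
  rw [pr_congr (E := fun ω => E ω ∧ F ω) (F := fun ω => E' ω ∧ F' ω)
      (fun ω => and_congr (hE ω) (hF ω)), pr_congr hF]

lemma pr_zero_of_subset [Fintype Ω] {P : Ω → ℝ} (hP : ∀ ω, 0 ≤ P ω)
    {E F : Ω → Prop} (hEF : ∀ ω, E ω → F ω) (hF : pr P F = 0) : pr P E = 0 := by
  have h := (Finset.sum_eq_zero_iff_of_nonneg (fun ω _ => by
    by_cases hω : F ω <;> simp [hω, hP ω])).mp hF
  apply Finset.sum_eq_zero
  intro ω _
  by_cases hω : E ω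
  · have := h ω (Finset.mem_univ ω)
    simp only [hEF ω hω, if_true] at this
    simp [hω, this]
  · simp [hω]

lemma pr_and_eq_cpr_mul [Fintype Ω] {P : Ω → ℝ} {E F : Ω → Prop}
    (hF : pr P F ≠ 0) : pr P (fun ω => E ω ∧ F ω) = cpr P E F * pr P F :=
  (div_mul_cancel₀ _ hF).symm

/-- unbiasedness of the oracle IPTW estimating function in the
selected (test-negative) sample, under treatment-independent sampling and a
multiplicative risk model with no effect modification by the confounder. -/
theorem stmt0 [Fintype Ω] {𝒰 : Type*} [Fintype 𝒰]
    (P : Ω → ℝ) (hP : ∀ ω, 0 ≤ P ω) (hPsum : ∑ ω, P ω = 1)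
    (A Y S : Ω → ℕ) (U : Ω → 𝒰)
    (hA : ∀ ω, A ω = 0 ∨ A ω = 1) (hY : ∀ ω, Y ω = 0 ∨ Y ω = 1)
    (hS : ∀ ω, S ω = 0 ∨ S ω = 1)
    (β₀ : ℝ) (g : 𝒰 → ℝ) (hg : ∀ u, 0 < g u)
    -- (i) S ⊥ A | (Y, U)
    (hCI : CondIndep P S A (fun ω => (Y ω, U ω)))
    -- (ii) P(Y=1 | A=a, U=u) = exp(β₀ a) g(u)
    (hmodel : ∀ (a : ℕ) (u : 𝒰), (a = 0 ∨ a = 1) →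
      pr P (fun ω => A ω = a ∧ U ω = u) ≠ 0 →
      cpr P (fun ω => Y ω = 1) (fun ω => A ω = a ∧ U ω = u) =
        Real.exp (β₀ * (a : ℝ)) * g u)
    -- (iii) 0 < P(A=a | U=u) < 1
    (hpos : ∀ (a : ℕ) (u : 𝒰), (a = 0 ∨ a = 1) → pr P (fun ω => U ω = u) ≠ 0 →
      0 < cpr P (fun ω => A ω = a) (fun ω => U ω = u) ∧
        cpr P (fun ω => A ω = a) (fun ω => U ω = u) < 1) :
    ∀ u : 𝒰, pr P (fun ω => U ω = u ∧ S ω = 1) ≠ 0 →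
      cexp P (fun ω => (-1 : ℝ) ^ (1 - A ω) *
          (cpr P (fun ω' => A ω' = A ω) (fun ω' => U ω' = U ω))⁻¹ *
          (Y ω : ℝ) * Real.exp (-β₀ * (A ω : ℝ)))
        (fun ω => U ω = u ∧ S ω = 1) = 0 := by
  intro u hUS
  have hUne : pr P (fun ω => U ω = u) ≠ 0 := fun h0 =>
    hUS (pr_zero_of_subset hP (fun ω hω => hω.1) h0)
  have hUpos : 0 < pr P (fun ω => U ω = u) :=
    lt_of_le_of_ne (pr_nonneg hP _) (Ne.symm hUne)
  set p0 := cpr P (fun ω => A ω = 0) (fun ω => U ω = u) with hp0def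
  set p1 := cpr P (fun ω => A ω = 1) (fun ω => U ω = u) with hp1def
  have hp0pos : 0 < p0 := (hpos 0 u (Or.inl rfl) hUne).1
  have hp1pos : 0 < p1 := (hpos 1 u (Or.inr rfl) hUne).1
  -- P(A=a ∧ U=u) = p_a * P(U=u) > 0
  have hAU : ∀ a : ℕ, pr P (fun ω => A ω = a ∧ U ω = u) =
      cpr P (fun ω => A ω = a) (fun ω => U ω = u) * pr P (fun ω => U ω = u) :=
    fun a => pr_and_eq_cpr_mul hUne
  have hAU0 : 0 < pr P (fun ω => A ω = 0 ∧ U ω = u) := by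
    rw [hAU 0]; exact mul_pos hp0pos hUpos
  have hAU1 : 0 < pr P (fun ω => A ω = 1 ∧ U ω = u) := by
    rw [hAU 1]; exact mul_pos hp1pos hUpos
  -- key identity for the two joint probabilities
  have key : ∀ a : ℕ, (a = 0 ∨ a = 1) →
      pr P (fun ω => A ω = a ∧ Y ω = 1 ∧ U ω = u ∧ S ω = 1) =
        cpr P (fun ω => S ω = 1) (fun ω => Y ω = 1 ∧ U ω = u) *
          (Real.exp (β₀ * (a : ℝ)) * g u *
            (cpr P (fun ω => A ω = a) (fun ω => U ω = u) *
              pr P (fun ω => U ω = u))) := by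
    intro a ha
    by_cases hYU : pr P (fun ω => Y ω = 1 ∧ U ω = u) = 0
    · have h1 : pr P (fun ω => A ω = a ∧ Y ω = 1 ∧ U ω = u ∧ S ω = 1) = 0 :=
        pr_zero_of_subset hP (fun ω hω => ⟨hω.2.1, hω.2.2.1⟩) hYU
      have h2 : pr P (fun ω => A ω = a ∧ U ω = u ∧ Y ω = 1) = 0 :=
        pr_zero_of_subset hP (fun ω hω => ⟨hω.2.2, hω.2.1⟩) hYU
      have hAUne : pr P (fun ω => A ω = a ∧ U ω = u) ≠ 0 := by
        rcases ha with h | h <;> subst h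
        exacts [ne_of_gt hAU0, ne_of_gt hAU1]
      -- model says cpr(Y=1 | A=a,U=u) = exp(β₀ a) g u, but numerator is 0
      have h3 : cpr P (fun ω => Y ω = 1) (fun ω => A ω = a ∧ U ω = u) = 0 := by
        unfold cpr
        rw [pr_congr (F := fun ω => A ω = a ∧ U ω = u ∧ Y ω = 1)
          (fun ω => by tauto), h2, zero_div]
      rw [hmodel a u ha hAUne] at h3
      exact absurd h3 (ne_of_gt (mul_pos (Real.exp_pos _) (hg u)))
    · have hCIa := hCI 1 a (1, u) (by
        rw [pr_congr (F := fun ω => Y ω = 1 ∧ U ω = u)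
          (fun ω => by simp [Prod.ext_iff])]
        exact hYU)
      have hc1 : cpr P (fun ω => S ω = 1 ∧ A ω = a)
            (fun ω => (Y ω, U ω) = (1, u)) =
          cpr P (fun ω => S ω = 1 ∧ A ω = a) (fun ω => Y ω = 1 ∧ U ω = u) :=
        cpr_congr (fun ω => Iff.rfl) (fun ω => by simp [Prod.ext_iff])
      have hc2 : cpr P (fun ω => S ω = 1) (fun ω => (Y ω, U ω) = (1, u)) =
          cpr P (fun ω => S ω = 1) (fun ω => Y ω = 1 ∧ U ω = u) :=
        cpr_congr (fun ω => Iff.rfl) (fun ω => by simp [Prod.ext_iff])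
      have hc3 : cpr P (fun ω => A ω = a) (fun ω => (Y ω, U ω) = (1, u)) =
          cpr P (fun ω => A ω = a) (fun ω => Y ω = 1 ∧ U ω = u) :=
        cpr_congr (fun ω => Iff.rfl) (fun ω => by simp [Prod.ext_iff])
      rw [hc1, hc2, hc3] at hCIa
      have step1 : pr P (fun ω => A ω = a ∧ Y ω = 1 ∧ U ω = u ∧ S ω = 1) =
          pr P (fun ω => (S ω = 1 ∧ A ω = a) ∧ (Y ω = 1 ∧ U ω = u)) :=
        pr_congr (fun ω => by tauto)
      rw [step1, pr_and_eq_cpr_mul hYU, hCIa]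
      have step2 : cpr P (fun ω => A ω = a) (fun ω => Y ω = 1 ∧ U ω = u) *
          pr P (fun ω => Y ω = 1 ∧ U ω = u) =
          pr P (fun ω => A ω = a ∧ Y ω = 1 ∧ U ω = u) := by
        rw [← pr_and_eq_cpr_mul hYU]
      have hAUne : pr P (fun ω => A ω = a ∧ U ω = u) ≠ 0 := by
        rcases ha with h | h <;> subst h
        exacts [ne_of_gt hAU0, ne_of_gt hAU1]
      have step3 : pr P (fun ω => A ω = a ∧ Y ω = 1 ∧ U ω = u) =
          cpr P (fun ω => Y ω = 1) (fun ω => A ω = a ∧ U ω = u) *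
            pr P (fun ω => A ω = a ∧ U ω = u) := by
        rw [← pr_and_eq_cpr_mul hAUne]
        exact pr_congr (fun ω => by tauto)
      rw [mul_assoc, step2, step3, hmodel a u ha hAUne, hAU a]
      try ring
  -- put it together
  unfold cexp
  beta_reduce
  have h1 := key 1 (Or.inr rfl)
  have h0 := key 0 (Or.inl rfl)
  rw [div_eq_zero_iff]
  left
  trans (Real.exp (-β₀) * p1⁻¹ *
          pr P (fun ω => A ω = 1 ∧ Y ω = 1 ∧ U ω = u ∧ S ω = 1)
        - p0⁻¹ * pr P (fun ω => A ω = 0 ∧ Y ω = 1 ∧ U ω = u ∧ S ω = 1))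
  · unfold pr
    rw [Finset.mul_sum, Finset.mul_sum, ← Finset.sum_sub_distrib]
    apply Finset.sum_congr rfl
    intro ω _
    by_cases hU : U ω = u
    · by_cases hSω : S ω = 1
      · rcases hY ω with hYω | hYω
        · rcases hA ω with hAω | hAω <;>
            simp [hU, hSω, hYω, hAω]
        · rcases hA ω with hAω | hAω <;>
          · simp only [hU, hSω, hYω, hAω, and_true, true_and, if_true, if_false,
              and_false, false_and, Nat.cast_one, Nat.cast_zero, Nat.one_ne_zero,
              Nat.zero_ne_one]
            norm_num [hp0def, hp1def]
            try ring_nf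
            try simp [mul_comm]
      · simp [hU, hSω, fun h : A ω = 0 => hSω]
    · simp [hU, fun h : A ω = 0 => hU]
  rw [h1, h0, Real.exp_neg]
  simp only [← hp0def, ← hp1def]
  push_cast
  rw [mul_one, mul_zero, Real.exp_zero]
  field_simp
  ring
end
end

section
/- Let U, Z, A be binary random variables on a discrete probability space with 0 < P(A=a | U=u) < 1 for all a, u ∈ {0,1}. For a ∈ {0,1} and z, u ∈ {0,1} define p_{za.u} = P(Z=z, A=a | U=u), and suppose the determinant Δ_a = p_{0a.0}·p_{1a.1} − p_{0a.1}·p_{1a.0} is nonzero. Define q(a, z) = [p_{1a.1} − p_{1a.0} + (p_{0a.0} − p_{0a.1} − p_{1a.1} + p_{1a.0})·z] / Δ_a. Then for all a, u ∈ {0,1}: E[q(A, Z) | A=a, U=u] = 1/P(A=a | U=u). -/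
open scoped BigOperators
open Real

attribute [local instance] Classical.propDecidable

noncomputable section

variable {Ω : Type*}

/-! The conditional mean of `q(a, Z)` given `A = a, U = u`, multiplied by `P(A = a | U = u)`,
is `Σ_z q(a, z) p_{za.u}`. So the claim is that `q(a, ·)` solves the two linear equations
`q(a, 0) p_{0a.u} + q(a, 1) p_{1a.u} = 1` (`u = 0, 1`), and the displayed formula is the
Cramer's-rule solution of that 2 × 2 system, whose determinant is `Δ_a`. -/

theorem pr_ne_zero_of_cpr_ne_zero [Fintype Ω] {P : Ω → ℝ} {E F : Ω → Prop}
    (h : cpr P E F ≠ 0) : pr P F ≠ 0 :=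
  (div_ne_zero_iff.mp h).2

theorem pr_and_ne_zero_of_cpr_ne_zero [Fintype Ω] {P : Ω → ℝ} {E F : Ω → Prop}
    (h : cpr P E F ≠ 0) : pr P (fun ω => E ω ∧ F ω) ≠ 0 :=
  (div_ne_zero_iff.mp h).1

theorem sum_ite_comp_eq_of_binary [Fintype Ω] (P : Ω → ℝ) {Z : Ω → ℕ}
    (hZ : ∀ ω, Z ω = 0 ∨ Z ω = 1) (g : ℕ → ℝ) (F : Ω → Prop) :
    (∑ ω, if F ω then g (Z ω) * P ω else 0) =
      g 0 * pr P (fun ω => Z ω = 0 ∧ F ω) + g 1 * pr P (fun ω => Z ω = 1 ∧ F ω) := by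
  unfold pr
  rw [Finset.mul_sum, Finset.mul_sum, ← Finset.sum_add_distrib]
  refine Finset.sum_congr rfl fun ω _ => ?_
  rcases hZ ω with h | h <;> simp [h]

theorem cexp_mul_cpr_eq_of_binary [Fintype Ω] (P : Ω → ℝ) {Z : Ω → ℕ}
    (hZ : ∀ ω, Z ω = 0 ∨ Z ω = 1) (g : ℕ → ℝ) {E F : Ω → Prop} (h : cpr P E F ≠ 0) :
    cexp P (fun ω => g (Z ω)) (fun ω => E ω ∧ F ω) * cpr P E F =
      g 0 * cpr P (fun ω => Z ω = 0 ∧ E ω) F + g 1 * cpr P (fun ω => Z ω = 1 ∧ E ω) F := by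
  have hF := pr_ne_zero_of_cpr_ne_zero h
  have hEF := pr_and_ne_zero_of_cpr_ne_zero h
  unfold cexp cpr at *
  rw [sum_ite_comp_eq_of_binary P hZ]
  simp only [and_assoc]
  field_simp

/-- With `m z u = p_{za.u}` at a fixed treatment level `a`, `bridge m` is the paper's `q(a, ·)`. -/
def bridge (m : ℕ → ℕ → ℝ) (z : ℝ) : ℝ :=
  (m 1 1 - m 1 0 + (m 0 0 - m 0 1 - m 1 1 + m 1 0) * z) / (m 0 0 * m 1 1 - m 0 1 * m 1 0)

theorem bridge_zero_mul_add_bridge_one_mul {m : ℕ → ℕ → ℝ}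
    (hdet : m 0 0 * m 1 1 - m 0 1 * m 1 0 ≠ 0) {u : ℕ} (hu : u = 0 ∨ u = 1) :
    bridge m 0 * m 0 u + bridge m 1 * m 1 u = 1 := by
  unfold bridge
  rw [div_mul_eq_mul_div, div_mul_eq_mul_div, ← add_div, div_eq_one_iff_eq hdet]
  rcases hu with rfl | rfl <;> ring

theorem stmt2_general [Fintype Ω]
    (P : Ω → ℝ)
    (U Z A : Ω → ℕ)
    (hZ : ∀ ω, Z ω = 0 ∨ Z ω = 1)
    (hpos : ∀ (a u : ℕ), (a = 0 ∨ a = 1) → (u = 0 ∨ u = 1) →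
      0 < cpr P (fun ω => A ω = a) (fun ω => U ω = u) ∧
        cpr P (fun ω => A ω = a) (fun ω => U ω = u) < 1)
    (p : ℕ → ℕ → ℕ → ℝ)
    (hp : ∀ z a u, p z a u =
      cpr P (fun ω => Z ω = z ∧ A ω = a) (fun ω => U ω = u))
    (Δ : ℕ → ℝ)
    (hΔdef : ∀ a, Δ a = p 0 a 0 * p 1 a 1 - p 0 a 1 * p 1 a 0)
    (hΔ : ∀ a, (a = 0 ∨ a = 1) → Δ a ≠ 0)
    (q : ℕ → ℕ → ℝ)
    (hq : ∀ a z, q a z =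
      (p 1 a 1 - p 1 a 0 + (p 0 a 0 - p 0 a 1 - p 1 a 1 + p 1 a 0) * (z : ℝ)) / Δ a) :
    ∀ (a u : ℕ), (a = 0 ∨ a = 1) → (u = 0 ∨ u = 1) →
      cexp P (fun ω => q a (Z ω)) (fun ω => A ω = a ∧ U ω = u) =
        (cpr P (fun ω => A ω = a) (fun ω => U ω = u))⁻¹ := by
  intro a u ha hu
  have hq_bridge : ∀ z : ℕ, q a z = bridge (fun z u => p z a u) z := fun z => by
    rw [hq, hΔdef]; rfl
  have hsolve := bridge_zero_mul_add_bridge_one_mul (m := fun z u => p z a u)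
    (hΔdef a ▸ hΔ a ha) hu
  apply eq_inv_of_mul_eq_one_left
  rw [cexp_mul_cpr_eq_of_binary P hZ (q a) (hpos a u ha hu).1.ne', ← hp, ← hp,
    hq_bridge, hq_bridge]
  exact_mod_cast hsolve

/-- Example 1: closed-form treatment confounding bridge function
with binary `U` and binary `Z`. -/
theorem stmt2 [Fintype Ω]
    (P : Ω → ℝ) (hP : ∀ ω, 0 ≤ P ω) (hPsum : ∑ ω, P ω = 1)
    (U Z A : Ω → ℕ)
    (hU : ∀ ω, U ω = 0 ∨ U ω = 1) (hZ : ∀ ω, Z ω = 0 ∨ Z ω = 1)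
    (hA : ∀ ω, A ω = 0 ∨ A ω = 1)
    (hpos : ∀ (a u : ℕ), (a = 0 ∨ a = 1) → (u = 0 ∨ u = 1) →
      0 < cpr P (fun ω => A ω = a) (fun ω => U ω = u) ∧
        cpr P (fun ω => A ω = a) (fun ω => U ω = u) < 1)
    (p : ℕ → ℕ → ℕ → ℝ)
    (hp : ∀ z a u, p z a u =
      cpr P (fun ω => Z ω = z ∧ A ω = a) (fun ω => U ω = u))
    (Δ : ℕ → ℝ)
    (hΔdef : ∀ a, Δ a = p 0 a 0 * p 1 a 1 - p 0 a 1 * p 1 a 0)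
    (hΔ : ∀ a, (a = 0 ∨ a = 1) → Δ a ≠ 0)
    (q : ℕ → ℕ → ℝ)
    (hq : ∀ a z, q a z =
      (p 1 a 1 - p 1 a 0 + (p 0 a 0 - p 0 a 1 - p 1 a 1 + p 1 a 0) * (z : ℝ)) / Δ a) :
    ∀ (a u : ℕ), (a = 0 ∨ a = 1) → (u = 0 ∨ u = 1) →
      cexp P (fun ω => q a (Z ω)) (fun ω => A ω = a ∧ U ω = u) =
        (cpr P (fun ω => A ω = a) (fun ω => U ω = u))⁻¹ :=
  stmt2_general P U Z A hZ hpos p hp Δ hΔdef hΔ q hq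
end
end

section
/- Let A ∈ {0,1} be a random variable with P(A=1 | U=u) = 1/(1 + exp(−μ₀ − μ₁·u)) (logistic in a real-valued U), and conditionally on (A, U), let Z be normally distributed with mean μ_{0Z} + μ_{AZ}·A + μ_{UZ}·U and variance σ² > 0, with μ_{UZ} ≠ 0. Define τ₂ = μ₁/μ_{UZ}, τ₁ = σ²τ₂² − τ₂μ_{AZ}, τ₀ = μ₀ − τ₂μ_{0Z} − σ²τ₂²/2, and q(a, z) = 1 + exp((−1)^a · (τ₀ + τ₁·a + τ₂·z)). Then for each a ∈ {0,1} and every u: E[q(a, Z) | A=a, U=u] = 1/P(A=a | U=u). -/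
open Real MeasureTheory

lemma gauss_density_eq (m : ℝ) {σ2 : ℝ} (hσ2 : 0 < σ2) (z : ℝ) :
    (Real.sqrt (2 * Real.pi * σ2))⁻¹ * Real.exp (-(z - m) ^ 2 / (2 * σ2)) =
      ProbabilityTheory.gaussianPDFReal m σ2.toNNReal z := by
  rw [ProbabilityTheory.gaussianPDFReal]
  simp [Real.coe_toNNReal _ hσ2.le, one_div]

lemma gauss_mgf (m c : ℝ) {σ2 : ℝ} (hσ2 : 0 < σ2) :
    ∫ z : ℝ, Real.exp (c * z) *
        ((Real.sqrt (2 * Real.pi * σ2))⁻¹ * Real.exp (-(z - m) ^ 2 / (2 * σ2))) =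
      Real.exp (c * m + σ2 * c ^ 2 / 2) := by
  have key : ∀ z : ℝ, Real.exp (c * z) *
      ((Real.sqrt (2 * Real.pi * σ2))⁻¹ * Real.exp (-(z - m) ^ 2 / (2 * σ2))) =
      Real.exp (c * m + σ2 * c ^ 2 / 2) *
        ((Real.sqrt (2 * Real.pi * σ2))⁻¹ *
          Real.exp (-(z - (m + σ2 * c)) ^ 2 / (2 * σ2))) := by
    intro z
    rw [mul_left_comm, mul_left_comm (Real.exp _), ← Real.exp_add, ← Real.exp_add]
    congr 2
    field_simp
    ring
  simp_rw [key, gauss_density_eq _ hσ2]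
  rw [integral_const_mul, ProbabilityTheory.integral_gaussianPDFReal_eq_one _
    (by simp [Real.toNNReal_eq_zero]; linarith), mul_one]

lemma gauss_integrable (m c : ℝ) {σ2 : ℝ} (hσ2 : 0 < σ2) :
    Integrable (fun z : ℝ => Real.exp (c * z) *
        ((Real.sqrt (2 * Real.pi * σ2))⁻¹ * Real.exp (-(z - m) ^ 2 / (2 * σ2)))) := by
  have key : ∀ z : ℝ, Real.exp (c * z) *
      ((Real.sqrt (2 * Real.pi * σ2))⁻¹ * Real.exp (-(z - m) ^ 2 / (2 * σ2))) =
      Real.exp (c * m + σ2 * c ^ 2 / 2) *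
        ProbabilityTheory.gaussianPDFReal (m + σ2 * c) σ2.toNNReal z := by
    intro z
    rw [← gauss_density_eq _ hσ2, mul_left_comm, mul_left_comm (Real.exp _),
      ← Real.exp_add, ← Real.exp_add]
    congr 2
    field_simp
    ring
  simp_rw [key]
  exact (ProbabilityTheory.integrable_gaussianPDFReal _ _).const_mul _

lemma main_aux (t c m : ℝ) {σ2 : ℝ} (hσ2 : 0 < σ2) :
    ∫ z : ℝ, (1 + Real.exp (t + c * z)) *
        ((Real.sqrt (2 * Real.pi * σ2))⁻¹ * Real.exp (-(z - m) ^ 2 / (2 * σ2))) =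
      1 + Real.exp (t + c * m + σ2 * c ^ 2 / 2) := by
  have key : ∀ z : ℝ, (1 + Real.exp (t + c * z)) *
      ((Real.sqrt (2 * Real.pi * σ2))⁻¹ * Real.exp (-(z - m) ^ 2 / (2 * σ2))) =
      Real.exp ((0:ℝ) * z) *
        ((Real.sqrt (2 * Real.pi * σ2))⁻¹ * Real.exp (-(z - m) ^ 2 / (2 * σ2))) +
      Real.exp t * (Real.exp (c * z) *
        ((Real.sqrt (2 * Real.pi * σ2))⁻¹ * Real.exp (-(z - m) ^ 2 / (2 * σ2)))) := by
    intro z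
    rw [Real.exp_add]
    simp
    ring
  simp_rw [key]
  rw [integral_add (gauss_integrable m 0 hσ2)
      (((gauss_integrable m c hσ2)).const_mul _),
    integral_const_mul, gauss_mgf m 0 hσ2, gauss_mgf m c hσ2,
    ← Real.exp_add]
  norm_num
  ring_nf

/-- Example 2: closed-form treatment confounding bridge function
with logistic treatment assignment and Gaussian negative control exposure.
`E[q(a,Z) | A=a, U=u] = 1/P(A=a | U=u)` where the conditional density of `Z`
given `A=a, U=u` is Gaussian with mean `μ0Z + μAZ·a + μUZ·u` and variance `σ2`. -/
theorem stmt16 (μ₀ μ₁ μ0Z μAZ μUZ σ2 : ℝ) (hσ2 : 0 < σ2) (hμUZ : μUZ ≠ 0)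
    (τ₀ τ₁ τ₂ : ℝ)
    (hτ₂ : τ₂ = μ₁ / μUZ)
    (hτ₁ : τ₁ = σ2 * τ₂ ^ 2 - τ₂ * μAZ)
    (hτ₀ : τ₀ = μ₀ - τ₂ * μ0Z - σ2 * τ₂ ^ 2 / 2)
    (q : ℕ → ℝ → ℝ)
    (hq : ∀ (a : ℕ) (z : ℝ),
      q a z = 1 + Real.exp ((-1 : ℝ) ^ a * (τ₀ + τ₁ * (a : ℝ) + τ₂ * z))) :
    ∀ a : ℕ, (a = 0 ∨ a = 1) → ∀ u : ℝ,
      (∫ z : ℝ, q a z *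
          ((Real.sqrt (2 * Real.pi * σ2))⁻¹ *
            Real.exp (-(z - (μ0Z + μAZ * (a : ℝ) + μUZ * u)) ^ 2 / (2 * σ2)))) =
        (if a = 1 then (1 + Real.exp (-(μ₀ + μ₁ * u)))⁻¹
          else 1 - (1 + Real.exp (-(μ₀ + μ₁ * u)))⁻¹)⁻¹ := by
  have hμ : τ₂ * μUZ = μ₁ := by rw [hτ₂]; field_simp
  rintro a (rfl | rfl) u
  · have hq0 : ∀ z : ℝ, q 0 z = 1 + Real.exp (τ₀ + τ₂ * z) := by
      intro z; rw [hq]; norm_num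
    simp_rw [hq0]
    rw [main_aux _ _ _ hσ2]
    have hexp : τ₀ + τ₂ * (μ0Z + μAZ * ((0:ℕ):ℝ) + μUZ * u) + σ2 * τ₂ ^ 2 / 2
        = μ₀ + μ₁ * u := by
      push_cast
      rw [hτ₀, ← hμ]; ring
    rw [hexp]
    simp only [if_neg (by norm_num : (0:ℕ) ≠ 1)]
    rw [Real.exp_neg]
    have hE : 0 < Real.exp (μ₀ + μ₁ * u) := Real.exp_pos _
    have h1 : (0:ℝ) < 1 + (Real.exp (μ₀ + μ₁ * u))⁻¹ := by positivity
    field_simp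
    ring
  · have hq1 : ∀ z : ℝ, q 1 z = 1 + Real.exp ((-(τ₀ + τ₁)) + (-τ₂) * z) := by
      intro z; rw [hq]; norm_num; ring_nf
    simp_rw [hq1]
    rw [main_aux _ _ _ hσ2]
    have hexp : (-(τ₀ + τ₁)) + (-τ₂) * (μ0Z + μAZ * ((1:ℕ):ℝ) + μUZ * u)
        + σ2 * (-τ₂) ^ 2 / 2 = -(μ₀ + μ₁ * u) := by
      push_cast
      rw [hτ₀, hτ₁, ← hμ]; ring
    rw [hexp]
    simp
end
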